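/- The commutator subgroup of GL₂(ẑ) is an open subgroup of SL₂(ẑ) of index 2 and of level 2; explicitly, it is the unique index 2 subgroup of SL₂(ẑ) containing all matrices congruent to the identity modulo 2. -/

import Mathlib

set_option synthInstance.maxSize 2048
set_option maxHeartbeats 1000000
open Matrix

instance (p : Nat.Primes) : Fact (Nat.Prime p) := ⟨p.2⟩

/-- The profinite completion `ẑ` of `ℤ`, realized as `∏_p ℤ_p`. -/
abbrev Zhat : Type := (p : Nat.Primes) → ℤ_[p]

/-- The subgroup `SL₂(ẑ)` of `GL₂(ẑ)`, realized as the kernel of the determinant. -/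
noncomputable def SL2hat : Subgroup (GL (Fin 2) Zhat) :=
  (Matrix.GeneralLinearGroup.det : GL (Fin 2) Zhat →* Zhatˣ).ker

/-- `A ≡ I (mod m)` in `GL₂(ẑ)`. -/
def CongrOneHat (m : ℕ) (A : GL (Fin 2) Zhat) : Prop :=
  ∀ p : Nat.Primes,
    Matrix.GeneralLinearGroup.map
      ((PadicInt.toZModPow (m.factorization p)).comp
        (Pi.evalRingHom (fun q : Nat.Primes => ℤ_[q]) p)) A = 1

/-- The level of a subgroup `H` of `SL₂(ẑ)` in `SL₂(ẑ)`. -/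
noncomputable def levelSL (H : Subgroup (GL (Fin 2) Zhat)) : ℕ :=
  sInf {n : ℕ | 0 < n ∧ ∀ A : GL (Fin 2) Zhat, A ∈ SL2hat → CongrOneHat n A → A ∈ H}

/-- The closed (topological) commutator subgroup of `GL₂(ẑ)`. -/
noncomputable def commGL2hat : Subgroup (GL (Fin 2) Zhat) :=
  (commutator (GL (Fin 2) Zhat)).topologicalClosure
open scoped commutatorElement
variable {R : Type*} [CommRing R]

def E12 (x : R) : (Matrix (Fin 2) (Fin 2) R)ˣ :=
  ⟨!![1,x;0,1], !![1,-x;0,1],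
   by ext i j; fin_cases i <;> fin_cases j <;> simp [Matrix.mul_apply, Fin.sum_univ_two],
   by ext i j; fin_cases i <;> fin_cases j <;> simp [Matrix.mul_apply, Fin.sum_univ_two]⟩
def E21 (x : R) : (Matrix (Fin 2) (Fin 2) R)ˣ :=
  ⟨!![1,0;x,1], !![1,0;-x,1],
   by ext i j; fin_cases i <;> fin_cases j <;> simp [Matrix.mul_apply, Fin.sum_univ_two],
   by ext i j; fin_cases i <;> fin_cases j <;> simp [Matrix.mul_apply, Fin.sum_univ_two]⟩
def Dg (u : Rˣ) : (Matrix (Fin 2) (Fin 2) R)ˣ :=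
  ⟨!![(u:R),0;0,1], !![((u⁻¹:Rˣ):R),0;0,1],
   by ext i j; fin_cases i <;> fin_cases j <;> simp [Matrix.mul_apply, Fin.sum_univ_two],
   by ext i j; fin_cases i <;> fin_cases j <;> simp [Matrix.mul_apply, Fin.sum_univ_two]⟩
def Dg' (u : Rˣ) : (Matrix (Fin 2) (Fin 2) R)ˣ :=
  ⟨!![1,0;0,(u:R)], !![1,0;0,((u⁻¹:Rˣ):R)],
   by ext i j; fin_cases i <;> fin_cases j <;> simp [Matrix.mul_apply, Fin.sum_univ_two],
   by ext i j; fin_cases i <;> fin_cases j <;> simp [Matrix.mul_apply, Fin.sum_univ_two]⟩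
def Sw : (Matrix (Fin 2) (Fin 2) R)ˣ :=
  ⟨!![0,1;1,0], !![0,1;1,0],
   by ext i j; fin_cases i <;> fin_cases j <;> simp [Matrix.mul_apply, Fin.sum_univ_two],
   by ext i j; fin_cases i <;> fin_cases j <;> simp [Matrix.mul_apply, Fin.sum_univ_two]⟩

lemma comm_Dg_Sw (u : Rˣ) : (⁅Dg u, (Sw : (Matrix (Fin 2) (Fin 2) R)ˣ)⁆).val
    = !![(u:R),0;0,((u⁻¹:Rˣ):R)] := by
  show (Dg u).val * Sw.val * (Dg u).inv * Sw.inv = _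
  simp only [Dg, Sw]
  ext i j; fin_cases i <;> fin_cases j <;> simp [Matrix.mul_apply, Fin.sum_univ_two]
lemma comm_Dg_E12 (u : Rˣ) (w : R) : (⁅Dg u, E12 w⁆).val = !![1,((u:R)-1)*w;0,1] := by
  show (Dg u).val * (E12 w).val * (Dg u).inv * (E12 w).inv = _
  simp only [Dg, E12]
  ext i j; fin_cases i <;> fin_cases j <;> simp [Matrix.mul_apply, Fin.sum_univ_two] <;> ring_nf
lemma comm_Dg'_E21 (u : Rˣ) (w : R) : (⁅Dg' u, E21 w⁆).val = !![1,0;((u:R)-1)*w,1] := by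
  show (Dg' u).val * (E21 w).val * (Dg' u).inv * (E21 w).inv = _
  simp only [Dg', E21]
  ext i j; fin_cases i <;> fin_cases j <;> simp [Matrix.mul_apply, Fin.sum_univ_two] <;> ring_nf

/-- decomposition when the top-left entry is a unit and the off-diagonal entries
are (unit times) even. -/
lemma decomp_of_unit (A : (Matrix (Fin 2) (Fin 2) R)ˣ) (a : Rˣ) (s t : R)
    (h00 : A.val 0 0 = a) (h01 : A.val 0 1 = a * (2*t)) (h10 : A.val 1 0 = a * (2*s))
    (hdet : A.val.det = 1) :
    ∃ x₁ y₁ x₂ y₂ x₃ y₃ : (Matrix (Fin 2) (Fin 2) R)ˣ,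
      A = ⁅x₁,y₁⁆ * ⁅x₂,y₂⁆ * ⁅x₃,y₃⁆ := by
  refine ⟨Dg' (-1), E21 (-s), Dg a, Sw, Dg (-1), E12 (-t), ?_⟩
  have hdet2 : A.val 0 0 * A.val 1 1 - A.val 0 1 * A.val 1 0 = 1 := by
    rw [← hdet, Matrix.det_fin_two]
  have ha : (a:R) * ((a⁻¹:Rˣ):R) = 1 := a.mul_inv
  apply Units.ext
  rw [Units.val_mul, Units.val_mul, comm_Dg'_E21, comm_Dg_Sw, comm_Dg_E12]
  ext i j
  fin_cases i <;> fin_cases j <;>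
    simp [Matrix.mul_apply, Fin.sum_univ_two, h00, h01, h10] <;> ring_nf
  rw [h00, h01, h10] at hdet2
  linear_combination ((a⁻¹:Rˣ):R) * hdet2 + (-(A.val 1 1) + 4*(a:R)*t*s - 2*t*(a:R) + 2*(a:R)*t)*ha

section Local
variable {p : ℕ} [Fact p.Prime]

lemma padic_unit_or_unit {a c : ℤ_[p]} {b d : ℤ_[p]} (h : a * d - b * c = 1) :
    IsUnit a ∨ IsUnit c := by
  by_contra hcon
  push_neg at hcon
  obtain ⟨ha, hc⟩ := hcon
  have ha' : a ∈ IsLocalRing.maximalIdeal ℤ_[p] := ha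
  have hc' : c ∈ IsLocalRing.maximalIdeal ℤ_[p] := hc
  have h1 : (1 : ℤ_[p]) ∈ IsLocalRing.maximalIdeal ℤ_[p] := by
    rw [← h]
    exact sub_mem (Ideal.mul_mem_right _ _ ha') (Ideal.mul_mem_left _ _ hc')
  exact (IsLocalRing.maximalIdeal.isMaximal ℤ_[p]).ne_top (Ideal.eq_top_of_isUnit_mem _ h1 isUnit_one)

lemma padic_two_unit (hp : p ≠ 2) : IsUnit (2 : ℤ_[p]) := by
  rw [PadicInt.isUnit_iff]
  have hle : ‖(2 : ℤ_[p])‖ ≤ 1 := PadicInt.norm_le_one _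
  rcases lt_or_eq_of_le hle with hlt | heq
  · exfalso
    have : ((2:ℤ) : ℤ_[p]) = (2 : ℤ_[p]) := by push_cast; ring
    rw [← this, PadicInt.norm_int_lt_one_iff_dvd] at hlt
    have h2 := Int.le_of_dvd (by norm_num) hlt
    have hple : p ≤ 2 := by exact_mod_cast h2
    have := (Fact.out : p.Prime).two_le
    exact hp (by omega)
  · exact heq

lemma decomp_of_unit2 (hu2 : IsUnit (2 : ℤ_[p])) (A : (Matrix (Fin 2) (Fin 2) ℤ_[p])ˣ)
    (ha : IsUnit (A.val 0 0)) (hdet : A.val.det = 1) :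
    ∃ x₁ y₁ x₂ y₂ x₃ y₃ : (Matrix (Fin 2) (Fin 2) ℤ_[p])ˣ,
      A = ⁅x₁,y₁⁆ * ⁅x₂,y₂⁆ * ⁅x₃,y₃⁆ := by
  set a := ha.unit with ha'
  set i2 := hu2.unit with hi2'
  have haa : A.val 0 0 = (a : ℤ_[p]) := (ha.unit_spec).symm
  have hmi : (a : ℤ_[p]) * ((a⁻¹ : _ˣ) : ℤ_[p]) = 1 := a.mul_inv
  have h2i : (2 : ℤ_[p]) * ((i2⁻¹ : _ˣ) : ℤ_[p]) = 1 := by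
    rw [← hu2.unit_spec]; exact i2.mul_inv
  apply decomp_of_unit A a (((a⁻¹ : _ˣ) : ℤ_[p]) * (A.val 1 0) * ((i2⁻¹ : _ˣ) : ℤ_[p]))
    (((a⁻¹ : _ˣ) : ℤ_[p]) * (A.val 0 1) * ((i2⁻¹ : _ˣ) : ℤ_[p])) haa ?_ ?_ hdet
  · linear_combination (-(2 * A.val 0 1 * ((i2⁻¹ : _ˣ) : ℤ_[p]))) * hmi + (-(A.val 0 1)) * h2i
  · linear_combination (-(2 * A.val 1 0 * ((i2⁻¹ : _ˣ) : ℤ_[p]))) * hmi + (-(A.val 1 0)) * h2i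

/-- every element of `SL₂(ℤ_p)` (congruent to 1 mod 2 if `p = 2`) is a product of
four commutators in `GL₂(ℤ_p)`. -/
lemma localDecomp (A : (Matrix (Fin 2) (Fin 2) ℤ_[p])ˣ) (hdet : A.val.det = 1)
    (h2 : p = 2 → (A.val 0 0 - 1 ∈ Ideal.span {(2:ℤ_[p])} ∧
      A.val 0 1 ∈ Ideal.span {(2:ℤ_[p])} ∧ A.val 1 0 ∈ Ideal.span {(2:ℤ_[p])})) :
    ∃ x₁ y₁ x₂ y₂ x₃ y₃ x₄ y₄ : (Matrix (Fin 2) (Fin 2) ℤ_[p])ˣ,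
      A = ⁅x₁,y₁⁆ * ⁅x₂,y₂⁆ * ⁅x₃,y₃⁆ * ⁅x₄,y₄⁆ := by
  by_cases hp : p = 2
  · obtain ⟨h1, hb, hc⟩ := h2 hp
    have hsp : (Ideal.span {(2:ℤ_[p])} : Ideal ℤ_[p]) = IsLocalRing.maximalIdeal ℤ_[p] := by
      rw [PadicInt.maximalIdeal_eq_span_p]
      congr 1
      norm_num [hp]
    have ha : IsUnit (A.val 0 0) := by
      by_contra hcon
      have hm : A.val 0 0 ∈ IsLocalRing.maximalIdeal ℤ_[p] := hcon
      rw [← hsp] at hm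
      have h1' : (1 : ℤ_[p]) ∈ Ideal.span {(2:ℤ_[p])} := by
        have := sub_mem hm h1
        simpa using this
      rw [hsp] at h1'
      exact (IsLocalRing.maximalIdeal.isMaximal ℤ_[p]).ne_top
        (Ideal.eq_top_of_isUnit_mem _ h1' isUnit_one)
    obtain ⟨t', ht'⟩ := Ideal.mem_span_singleton'.1 hb
    obtain ⟨s', hs'⟩ := Ideal.mem_span_singleton'.1 hc
    set a := ha.unit with ha'
    have haa : A.val 0 0 = (a : ℤ_[p]) := by rw [ha']; simp
    have hmi := a.mul_inv
    have h01 : A.val 0 1 = (a : ℤ_[p]) * (2 * (((a⁻¹ : _ˣ) : ℤ_[p]) * t')) := by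
      rw [← ht']; linear_combination (-(2*t')) * hmi
    have h10 : A.val 1 0 = (a : ℤ_[p]) * (2 * (((a⁻¹ : _ˣ) : ℤ_[p]) * s')) := by
      rw [← hs']; linear_combination (-(2*s')) * hmi
    obtain ⟨x₁, y₁, x₂, y₂, x₃, y₃, hA⟩ := decomp_of_unit A a (((a⁻¹ : _ˣ) : ℤ_[p]) * s')
      (((a⁻¹ : _ˣ) : ℤ_[p]) * t') haa h01 h10 hdet
    exact ⟨1, 1, x₁, y₁, x₂, y₂, x₃, y₃, by simpa using hA⟩
  · have hu2 : IsUnit (2 : ℤ_[p]) := padic_two_unit hp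
    have hdet2 : A.val 0 0 * A.val 1 1 - A.val 0 1 * A.val 1 0 = 1 := by
      rw [← hdet, Matrix.det_fin_two]
    by_cases ha : IsUnit (A.val 0 0)
    · obtain ⟨x₁, y₁, x₂, y₂, x₃, y₃, hA⟩ := decomp_of_unit2 hu2 A ha hdet
      exact ⟨1, 1, x₁, y₁, x₂, y₂, x₃, y₃, by simpa using hA⟩
    · have hc : IsUnit (A.val 1 0) := (padic_unit_or_unit hdet2).resolve_left ha
      set B := E12 (1 : ℤ_[p]) * A with hB
      have hB00 : B.val 0 0 = A.val 0 0 + A.val 1 0 := by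
        rw [hB, Units.val_mul]
        simp [E12, Matrix.mul_apply, Fin.sum_univ_two]
      have hBu : IsUnit (B.val 0 0) := by
        by_contra hcon
        apply ha
        have h1 : B.val 0 0 ∈ IsLocalRing.maximalIdeal ℤ_[p] := hcon
        have h2 : A.val 1 0 ∉ IsLocalRing.maximalIdeal ℤ_[p] := by
          rw [IsLocalRing.mem_maximalIdeal, mem_nonunits_iff, not_not]; exact hc
        by_contra ha'
        apply h2
        have ha'' : A.val 0 0 ∈ IsLocalRing.maximalIdeal ℤ_[p] := ha'
        have := sub_mem h1 ha''
        rw [hB00] at this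
        simpa using this
      have hBdet : B.val.det = 1 := by
        rw [hB, Units.val_mul, Matrix.det_mul, hdet, mul_one]
        simp [E12, Matrix.det_fin_two_of]
      obtain ⟨x₁, y₁, x₂, y₂, x₃, y₃, hBeq⟩ := decomp_of_unit2 hu2 B hBu hBdet
      set i2 := hu2.unit with hi2'
      have h2i : (2 : ℤ_[p]) * ((i2⁻¹ : _ˣ) : ℤ_[p]) = 1 := by
        rw [← hu2.unit_spec]; exact i2.mul_inv
      have hE : (⁅Dg (-1 : ℤ_[p]ˣ), E12 (((i2⁻¹ : _ˣ) : ℤ_[p]))⁆) = (E12 (1:ℤ_[p]))⁻¹ := by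
        apply Units.ext
        rw [comm_Dg_E12]
        show _ = (E12 (1:ℤ_[p])).inv
        have : ((((-1 : ℤ_[p]ˣ)) : ℤ_[p]) - 1) * (((i2⁻¹ : _ˣ) : ℤ_[p])) = -1 := by
          have : (((-1 : ℤ_[p]ˣ)) : ℤ_[p]) = -1 := rfl
          rw [this]
          linear_combination -h2i
        rw [this]
        simp [E12]
      refine ⟨Dg (-1 : ℤ_[p]ˣ), E12 (((i2⁻¹ : _ˣ) : ℤ_[p])), x₁, y₁, x₂, y₂, x₃, y₃, ?_⟩
      rw [hE]
      have : A = (E12 (1:ℤ_[p]))⁻¹ * B := by rw [hB]; group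
      rw [this, hBeq]
      group

end Local


section Glue

/-- assembling componentwise units into `GL₂(ẑ)`. -/
def glue : ((p : Nat.Primes) → (Matrix (Fin 2) (Fin 2) ℤ_[p])ˣ) →* GL (Fin 2) Zhat where
  toFun u :=
    { val := Matrix.of fun i j => fun p => (u p).val i j
      inv := Matrix.of fun i j => fun p => (u p).inv i j
      val_inv := by
        ext i j p
        have : ((u p).val * (u p).inv) i j = (1 : Matrix (Fin 2) (Fin 2) ℤ_[p]) i j := by
          rw [(u p).val_inv]
        simpa [Matrix.mul_apply, Fin.sum_univ_two, Matrix.one_apply,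
          apply_ite (fun z : Zhat => z p)] using this
      inv_val := by
        ext i j p
        have : ((u p).inv * (u p).val) i j = (1 : Matrix (Fin 2) (Fin 2) ℤ_[p]) i j := by
          rw [(u p).inv_val]
        simpa [Matrix.mul_apply, Fin.sum_univ_two, Matrix.one_apply,
          apply_ite (fun z : Zhat => z p)] using this }
  map_one' := by
    apply Units.ext
    ext i j p
    simp [Matrix.one_apply, apply_ite (fun z : Zhat => z p)]
  map_mul' u v := by
    apply Units.ext
    ext i j p
    have : ((u p).val * (v p).val) i j = (((u p) * (v p)).val) i j := rfl
    simpa [Matrix.mul_apply, Fin.sum_univ_two, apply_ite (fun z : Zhat => z p)] using this.symm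

/-- the projection `GL₂(ẑ) → GL₂(ℤ_p)`. -/
noncomputable def projp (p : Nat.Primes) : GL (Fin 2) Zhat →* GL (Fin 2) ℤ_[p] :=
  Matrix.GeneralLinearGroup.map (Pi.evalRingHom (fun q : Nat.Primes => ℤ_[q]) p)

lemma glue_projp (A : GL (Fin 2) Zhat) : glue (fun p => projp p A) = A := by
  apply Units.ext
  ext i j p
  rfl

theorem mem_commutator_of_congr (A : GL (Fin 2) Zhat) (hA : A ∈ SL2hat)
    (hc : CongrOneHat 2 A) : A ∈ commutator (GL (Fin 2) Zhat) := by
  -- componentwise determinant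
  have hdet : A.val.det = 1 := by
    have h1 : Matrix.GeneralLinearGroup.det A = 1 := hA
    have := congrArg Units.val h1
    simpa using this
  have hdetp : ∀ p : Nat.Primes, ((projp p A).val).det = 1 := by
    intro p
    have h1 : (projp p A).val
        = (Pi.evalRingHom (fun q : Nat.Primes => ℤ_[q]) p).mapMatrix A.val := rfl
    rw [h1, ← RingHom.map_det, hdet]
    simp
  -- congruence conditions at 2
  have hcong : ∀ p : Nat.Primes, (p : ℕ) = 2 →
      ((projp p A).val 0 0 - 1 ∈ Ideal.span {(2:ℤ_[p])} ∧
        (projp p A).val 0 1 ∈ Ideal.span {(2:ℤ_[p])} ∧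
        (projp p A).val 1 0 ∈ Ideal.span {(2:ℤ_[p])}) := by
    intro p hp2
    have he : (2:ℕ).factorization p = 1 := by
      rw [hp2]; exact Nat.Prime.factorization_self Nat.prime_two
    have hp2' : ((p : ℕ) : ℤ_[p]) = 2 := by
      have := congrArg (fun n : ℕ => (n : ℤ_[p])) hp2
      simpa using this
    have hcp := hc p
    have key : ∀ i j, (projp p A).val i j - (1 : Matrix (Fin 2) (Fin 2) ℤ_[p]) i j
        ∈ Ideal.span {(2:ℤ_[p])} := by
      intro i j
      have h0 := (Matrix.GeneralLinearGroup.ext_iff _ _).1 hcp i j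
      have h2 : (PadicInt.toZModPow ((2:ℕ).factorization p))
          ((1 : Matrix (Fin 2) (Fin 2) ℤ_[p]) i j)
          = (1 : Matrix (Fin 2) (Fin 2) (ZMod ((p:ℕ) ^ ((2:ℕ).factorization p)))) i j := by
        by_cases hij : i = j
        · subst hij; simp
        · simp [Matrix.one_apply_ne hij]
      have hker : (projp p A).val i j - (1 : Matrix (Fin 2) (Fin 2) ℤ_[p]) i j
          ∈ RingHom.ker (PadicInt.toZModPow ((2:ℕ).factorization p)) := by
        rw [RingHom.mem_ker, map_sub, h2, sub_eq_zero]
        exact h0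
      rw [PadicInt.ker_toZModPow, he, pow_one, hp2'] at hker
      exact hker
    refine ⟨by simpa using key 0 0, by simpa using key 0 1, by simpa using key 1 0⟩
  have hloc : ∀ p : Nat.Primes,
      ∃ x₁ y₁ x₂ y₂ x₃ y₃ x₄ y₄ : (Matrix (Fin 2) (Fin 2) ℤ_[p])ˣ,
        projp p A = ⁅x₁,y₁⁆ * ⁅x₂,y₂⁆ * ⁅x₃,y₃⁆ * ⁅x₄,y₄⁆ := by
    intro p
    exact localDecomp (projp p A) (hdetp p) (fun h => hcong p h)
  choose x₁ y₁ x₂ y₂ x₃ y₃ x₄ y₄ hx using hloc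
  have hAeq : A = ⁅glue x₁, glue y₁⁆ * ⁅glue x₂, glue y₂⁆ * ⁅glue x₃, glue y₃⁆
      * ⁅glue x₄, glue y₄⁆ := by
    have h1 : (fun p => projp p A)
        = (⁅x₁, y₁⁆ * ⁅x₂, y₂⁆ * ⁅x₃, y₃⁆ * ⁅x₄, y₄⁆ :
            (p : Nat.Primes) → (Matrix (Fin 2) (Fin 2) ℤ_[p])ˣ) := funext hx
    calc A = glue (fun p => projp p A) := (glue_projp A).symm
    _ = glue (⁅x₁, y₁⁆ * ⁅x₂, y₂⁆ * ⁅x₃, y₃⁆ * ⁅x₄, y₄⁆) := by rw [h1]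
    _ = _ := by
        rw [_root_.map_mul, _root_.map_mul, _root_.map_mul, map_commutatorElement,
          map_commutatorElement, map_commutatorElement, map_commutatorElement]
  rw [hAeq]
  exact mul_mem (mul_mem (mul_mem
    (Subgroup.commutator_mem_commutator (Subgroup.mem_top _) (Subgroup.mem_top _))
    (Subgroup.commutator_mem_commutator (Subgroup.mem_top _) (Subgroup.mem_top _)))
    (Subgroup.commutator_mem_commutator (Subgroup.mem_top _) (Subgroup.mem_top _)))
    (Subgroup.commutator_mem_commutator (Subgroup.mem_top _) (Subgroup.mem_top _))

end Glue

section ModTwo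

def p2 : Nat.Primes := ⟨2, Nat.prime_two⟩

noncomputable def psi : Zhat →+* ZMod 2 :=
  (PadicInt.toZModPow 1).comp (Pi.evalRingHom (fun q : Nat.Primes => ℤ_[q]) p2)

/-- reduction mod 2 on `GL₂(ẑ)`. -/
noncomputable def red : GL (Fin 2) Zhat →* GL (Fin 2) (ZMod 2) :=
  Matrix.GeneralLinearGroup.map psi

lemma subsingleton_units {M : Type*} [Monoid M] [Subsingleton M] : Subsingleton Mˣ :=
  ⟨fun a b => Units.ext (Subsingleton.elim _ _)⟩

lemma congrOne_iff_red (A : GL (Fin 2) Zhat) : CongrOneHat 2 A ↔ red A = 1 := by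
  constructor
  · intro hc
    have hcp := hc p2
    have he : (2:ℕ).factorization (p2 : ℕ) = 1 := Nat.Prime.factorization_self Nat.prime_two
    rw [he] at hcp
    exact hcp
  · intro hr p
    by_cases hp : (p : ℕ) = 2
    · have hpp : p = p2 := Subtype.ext hp
      subst hpp
      have he : (2:ℕ).factorization (p2 : ℕ) = 1 := Nat.Prime.factorization_self Nat.prime_two
      rw [he]
      exact hr
    · have he : (2:ℕ).factorization (p : ℕ) = 0 := by
        rw [Nat.Prime.factorization Nat.prime_two]
        exact Finsupp.single_eq_of_ne' (fun h => hp h.symm)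
      rw [he]
      haveI : Subsingleton (ZMod ((p:ℕ) ^ (0:ℕ))) := by rw [pow_zero]; infer_instance
      haveI := subsingleton_units (M := Matrix (Fin 2) (Fin 2) (ZMod ((p:ℕ) ^ (0:ℕ))))
      exact Subsingleton.elim _ _

def cu : GL (Fin 2) (ZMod 2) := ⟨!![1,1;1,0], !![0,1;1,1], by decide, by decide⟩

/-- the subgroup `A₃` of `GL₂(𝔽₂) ≅ S₃`. -/
def Dsub : Subgroup (GL (Fin 2) (ZMod 2)) where
  carrier := {g | g = 1 ∨ g = cu ∨ g = cu * cu}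
  one_mem' := Or.inl rfl
  mul_mem' := by
    have key : ∀ a b : GL (Fin 2) (ZMod 2), (a = 1 ∨ a = cu ∨ a = cu * cu) →
        (b = 1 ∨ b = cu ∨ b = cu * cu) → (a * b = 1 ∨ a * b = cu ∨ a * b = cu * cu) := by decide
    exact fun {a b} ha hb => key a b ha hb
  inv_mem' := by
    have key : ∀ a : GL (Fin 2) (ZMod 2), (a = 1 ∨ a = cu ∨ a = cu * cu) →
        (a⁻¹ = 1 ∨ a⁻¹ = cu ∨ a⁻¹ = cu * cu) := by decide
    exact fun {a} ha => key a ha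

lemma padic_fiber_open {p : ℕ} [Fact p.Prime] (n : ℕ) (c : ZMod (p ^ n)) :
    IsOpen {w : ℤ_[p] | PadicInt.toZModPow n w = c} := by
  by_cases h : ∃ w0 : ℤ_[p], PadicInt.toZModPow n w0 = c
  · obtain ⟨w0, hw0⟩ := h
    have hset : {w : ℤ_[p] | PadicInt.toZModPow n w = c}
        = {w : ℤ_[p] | ‖w - w0‖ ≤ (p : ℝ) ^ (-(n:ℤ))} := by
      ext w
      simp only [Set.mem_setOf_eq]
      rw [PadicInt.norm_le_pow_iff_mem_span_pow, ← PadicInt.ker_toZModPow, RingHom.mem_ker,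
        map_sub, hw0, sub_eq_zero]
    rw [hset]
    rw [Metric.isOpen_iff]
    intro w hw
    refine ⟨(p : ℝ) ^ (-(n:ℤ)), zpow_pos (by exact_mod_cast (Fact.out : p.Prime).pos) _, ?_⟩
    intro v hv
    simp only [Metric.mem_ball, dist_eq_norm] at hv
    simp only [Set.mem_setOf_eq] at hw ⊢
    calc ‖v - w0‖ = ‖(v - w) + (w - w0)‖ := by ring_nf
    _ ≤ max ‖v - w‖ ‖w - w0‖ := PadicInt.nonarchimedean _ _
    _ ≤ (p : ℝ) ^ (-(n:ℤ)) := max_le (le_of_lt hv) hw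
  · have hset : {w : ℤ_[p] | PadicInt.toZModPow n w = c} = ∅ := by
      ext w
      simp only [Set.mem_setOf_eq, Set.mem_empty_iff_false, iff_false]
      exact fun hw => h ⟨w, hw⟩
    rw [hset]
    exact isOpen_empty

lemma isOpen_red_fiber (g : GL (Fin 2) (ZMod 2)) : IsOpen {A : GL (Fin 2) Zhat | red A = g} := by
  have hset : {A : GL (Fin 2) Zhat | red A = g}
      = Units.val ⁻¹' (⋂ i, ⋂ j, (fun M : Matrix (Fin 2) (Fin 2) Zhat =>
          (M i j) p2) ⁻¹' {w : ℤ_[p2] | PadicInt.toZModPow 1 w = g.val i j}) := by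
    ext A
    simp only [Set.mem_preimage, Set.mem_iInter, Set.mem_setOf_eq]
    constructor
    · intro hA i j
      have := (Matrix.GeneralLinearGroup.ext_iff _ _).1 hA i j
      exact this
    · intro hA
      apply Matrix.GeneralLinearGroup.ext
      intro i j
      exact hA i j
  rw [hset]
  apply IsOpen.preimage Units.continuous_val
  apply isOpen_iInter_of_finite
  intro i
  apply isOpen_iInter_of_finite
  intro j
  apply IsOpen.preimage
  · exact (continuous_apply p2).comp ((continuous_apply j).comp (continuous_apply i))
  · exact padic_fiber_open 1 _

end ModTwo

section Core

/-- the fixed commutator lifting `cu`. -/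
noncomputable def Bu : GL (Fin 2) Zhat := ⁅(Sw : (Matrix (Fin 2) (Fin 2) Zhat)ˣ), E12 (1 : Zhat)⁆

lemma red_Sw : red (Sw : (Matrix (Fin 2) (Fin 2) Zhat)ˣ) = (Sw : (Matrix (Fin 2) (Fin 2) (ZMod 2))ˣ) := by
  apply Matrix.GeneralLinearGroup.ext
  intro i j
  show psi ((Sw : (Matrix (Fin 2) (Fin 2) Zhat)ˣ).val i j) = (Sw : (Matrix (Fin 2) (Fin 2) (ZMod 2))ˣ).val i j
  fin_cases i <;> fin_cases j <;> simp [Sw]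

lemma red_E12 : red (E12 (1 : Zhat)) = E12 (1 : ZMod 2) := by
  apply Matrix.GeneralLinearGroup.ext
  intro i j
  show psi ((E12 (1:Zhat)).val i j) = (E12 (1 : ZMod 2)).val i j
  fin_cases i <;> fin_cases j <;> simp [E12]

lemma red_Bu : red Bu = cu := by
  rw [Bu, map_commutatorElement, red_Sw, red_E12]
  decide

noncomputable def ddet : GL (Fin 2) Zhat →* Zhatˣ := Matrix.GeneralLinearGroup.det

lemma ddet_commutator (a b : GL (Fin 2) Zhat) : ddet ⁅a, b⁆ = 1 := by
  rw [map_commutatorElement]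
  exact commutatorElement_eq_one_iff_mul_comm.2 (mul_comm _ _)

lemma commutator_le_SL : commutator (GL (Fin 2) Zhat) ≤ SL2hat := by
  rw [commutator_def]
  rw [Subgroup.commutator_le]
  intro g _ h _
  show ddet ⁅g, h⁆ = 1
  exact ddet_commutator g h

lemma mem_SL_det (x : GL (Fin 2) Zhat) : x ∈ SL2hat ↔ ddet x = 1 := Iff.rfl

lemma Bu_mem_comm : Bu ∈ commutator (GL (Fin 2) Zhat) :=
  Subgroup.commutator_mem_commutator (Subgroup.mem_top _) (Subgroup.mem_top _)

lemma Bu_mem_SL : Bu ∈ SL2hat := ddet_commutator _ _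

lemma isClosed_comap_Dsub : IsClosed ((Dsub.comap red : Subgroup (GL (Fin 2) Zhat)) : Set (GL (Fin 2) Zhat)) := by
  rw [← isOpen_compl_iff]
  have hset : ((Dsub.comap red : Subgroup (GL (Fin 2) Zhat)) : Set (GL (Fin 2) Zhat))ᶜ
      = ⋃ (g : GL (Fin 2) (ZMod 2)) (_ : g ∉ Dsub), {A : GL (Fin 2) Zhat | red A = g} := by
    ext A
    simp only [Set.mem_compl_iff, SetLike.mem_coe, Subgroup.mem_comap, Set.mem_iUnion,
      Set.mem_setOf_eq]
    constructor
    · intro hA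
      exact ⟨red A, hA, rfl⟩
    · rintro ⟨g, hg, rfl⟩
      exact hg
  rw [hset]
  exact isOpen_iUnion fun g => isOpen_iUnion fun _ => isOpen_red_fiber g

lemma comm_le_comap : commGL2hat ≤ Dsub.comap red := by
  apply Subgroup.topologicalClosure_minimal _ _ isClosed_comap_Dsub
  rw [commutator_def, Subgroup.commutator_le]
  intro g _ h _
  rw [Subgroup.mem_comap, map_commutatorElement]
  have key : ∀ a b : GL (Fin 2) (ZMod 2), ⁅a,b⁆ = 1 ∨ ⁅a,b⁆ = cu ∨ ⁅a,b⁆ = cu * cu := by decide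
  exact key (red g) (red h)

lemma isClosed_SL : IsClosed (SL2hat : Set (GL (Fin 2) Zhat)) := by
  have hset : (SL2hat : Set (GL (Fin 2) Zhat))
      = (fun A : GL (Fin 2) Zhat => A.val.det) ⁻¹' {1} := by
    ext A
    simp only [SetLike.mem_coe, Set.mem_preimage, Set.mem_singleton_iff]
    constructor
    · intro hA
      exact congrArg Units.val (show ddet A = 1 from hA)
    · intro hA
      exact Units.ext hA
  rw [hset]
  apply IsClosed.preimage
  · exact Continuous.matrix_det Units.continuous_val
  · exact isClosed_singleton

lemma comm_subset_SL : commGL2hat ≤ SL2hat :=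
  Subgroup.topologicalClosure_minimal _ commutator_le_SL isClosed_SL

/-- the key characterization of the closed commutator subgroup. -/
theorem mem_comm_iff (x : GL (Fin 2) Zhat) (hx : x ∈ SL2hat) :
    x ∈ commGL2hat ↔ red x ∈ Dsub := by
  constructor
  · intro h
    have := comm_le_comap h
    rwa [Subgroup.mem_comap] at this
  · intro hD
    have main : ∀ y : GL (Fin 2) Zhat, y ∈ SL2hat → red y = 1 → y ∈ commGL2hat := by
      intro y hy h1
      exact Subgroup.le_topologicalClosure _
        (mem_commutator_of_congr y hy ((congrOne_iff_red y).2 h1))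
    have hBu : Bu ∈ commGL2hat := Subgroup.le_topologicalClosure _ Bu_mem_comm
    rcases hD with h1 | hcu | hcu2
    · exact main x hx h1
    · have hy : x * Bu⁻¹ ∈ commGL2hat := by
        apply main
        · show ddet (x * Bu⁻¹) = 1
          rw [_root_.map_mul, _root_.map_inv, (mem_SL_det x).1 hx, (mem_SL_det Bu).1 Bu_mem_SL]
          simp
        · rw [_root_.map_mul, _root_.map_inv, red_Bu, hcu]
          group
      have : x = (x * Bu⁻¹) * Bu := by group
      rw [this]
      exact mul_mem hy hBu
    · have hy : x * (Bu⁻¹ * Bu⁻¹) ∈ commGL2hat := by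
        apply main
        · show ddet (x * (Bu⁻¹ * Bu⁻¹)) = 1
          rw [_root_.map_mul, _root_.map_mul, _root_.map_inv, (mem_SL_det x).1 hx, (mem_SL_det Bu).1 Bu_mem_SL]
          simp
        · rw [_root_.map_mul, _root_.map_mul, _root_.map_inv, red_Bu, hcu2]
          group
      have : x = (x * (Bu⁻¹ * Bu⁻¹)) * (Bu * Bu) := by group
      rw [this]
      exact mul_mem hy (mul_mem hBu hBu)

end Core

section Final

lemma mem_Dsub_iff (g : GL (Fin 2) (ZMod 2)) : g ∈ Dsub ↔ (g = 1 ∨ g = cu ∨ g = cu * cu) :=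
  Iff.rfl

noncomputable def Wu : GL (Fin 2) Zhat := E12 (1 : Zhat)

lemma Wu_mem_SL : Wu ∈ SL2hat := by
  show ddet Wu = 1
  apply Units.ext
  show (!![(1:Zhat),1;0,1]).det = 1
  rw [Matrix.det_fin_two_of]
  ring

lemma red_Wu : red Wu = E12 (1 : ZMod 2) := red_E12

lemma tu_not_mem : E12 (1 : ZMod 2) ∉ Dsub := by
  rw [mem_Dsub_iff]
  decide

/-- index-two property. -/
lemma index_two : (commGL2hat.subgroupOf SL2hat).index = 2 := by
  rw [Subgroup.index_eq_two_iff]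
  refine ⟨⟨Wu, Wu_mem_SL⟩, ?_⟩
  intro b
  have hbW_SL : (b : GL (Fin 2) Zhat) * Wu ∈ SL2hat := SL2hat.mul_mem b.2 Wu_mem_SL
  have hcoe : ((b * ⟨Wu, Wu_mem_SL⟩ : SL2hat) : GL (Fin 2) Zhat) = (b : GL (Fin 2) Zhat) * Wu :=
    rfl
  by_cases hb : red (b : GL (Fin 2) Zhat) ∈ Dsub
  · refine Or.inr ⟨(Subgroup.mem_subgroupOf).2 ((mem_comm_iff _ b.2).2 hb), ?_⟩
    intro hP
    have h1 : (b : GL (Fin 2) Zhat) * Wu ∈ commGL2hat := by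
      have := (Subgroup.mem_subgroupOf).1 hP
      rwa [hcoe] at this
    have h2 : red ((b : GL (Fin 2) Zhat) * Wu) ∈ Dsub := (mem_comm_iff _ hbW_SL).1 h1
    rw [_root_.map_mul, red_Wu] at h2
    have h3 : E12 (1 : ZMod 2) ∈ Dsub := by
      have := Dsub.mul_mem (Dsub.inv_mem hb) h2
      rwa [inv_mul_cancel_left] at this
    exact tu_not_mem h3
  · refine Or.inl ⟨?_, fun hQ => hb ((mem_comm_iff _ b.2).1 ((Subgroup.mem_subgroupOf).1 hQ))⟩
    apply (Subgroup.mem_subgroupOf).2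
    rw [hcoe]
    apply (mem_comm_iff _ hbW_SL).2
    rw [_root_.map_mul, red_Wu, mem_Dsub_iff]
    have key : ∀ g : GL (Fin 2) (ZMod 2), ¬(g = 1 ∨ g = cu ∨ g = cu * cu) →
        (g * E12 (1 : ZMod 2) = 1 ∨ g * E12 (1 : ZMod 2) = cu ∨
          g * E12 (1 : ZMod 2) = cu * cu) := by decide
    exact key _ (fun h => hb ((mem_Dsub_iff _).2 h))

lemma congrOneHat_one (A : GL (Fin 2) Zhat) : CongrOneHat 1 A := by
  intro p
  have he : (1:ℕ).factorization (p : ℕ) = 0 := by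
    rw [Nat.factorization_one]
    rfl
  rw [he]
  haveI : Subsingleton (ZMod ((p:ℕ) ^ (0:ℕ))) := by rw [pow_zero]; infer_instance
  haveI := subsingleton_units (M := Matrix (Fin 2) (Fin 2) (ZMod ((p:ℕ) ^ (0:ℕ))))
  exact Subsingleton.elim _ _

lemma Wu_not_mem_comm : Wu ∉ commGL2hat := by
  intro h
  exact tu_not_mem (red_Wu ▸ (mem_comm_iff Wu Wu_mem_SL).1 h)

lemma congr_mem_comm : ∀ A : GL (Fin 2) Zhat, A ∈ SL2hat → CongrOneHat 2 A → A ∈ commGL2hat :=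
  fun A hA hc => Subgroup.le_topologicalClosure _ (mem_commutator_of_congr A hA hc)

lemma level_two : levelSL commGL2hat = 2 := by
  have h2mem : 2 ∈ {n : ℕ | 0 < n ∧ ∀ A : GL (Fin 2) Zhat,
      A ∈ SL2hat → CongrOneHat n A → A ∈ commGL2hat} :=
    ⟨by norm_num, congr_mem_comm⟩
  apply le_antisymm
  · exact Nat.sInf_le h2mem
  · apply le_csInf ⟨2, h2mem⟩
    intro m hm
    obtain ⟨hm0, hmc⟩ := hm
    by_contra hlt
    push_neg at hlt
    interval_cases m
    exact Wu_not_mem_comm (hmc Wu Wu_mem_SL (congrOneHat_one Wu))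

lemma open_comm : IsOpen {x : SL2hat | (x : GL (Fin 2) Zhat) ∈ commGL2hat} := by
  have hset : {x : SL2hat | (x : GL (Fin 2) Zhat) ∈ commGL2hat}
      = ((commGL2hat.subgroupOf SL2hat : Subgroup SL2hat) : Set SL2hat) := by
    ext x
    simp [Subgroup.mem_subgroupOf]
  rw [hset]
  apply Subgroup.isOpen_mono (H₁ := (MonoidHom.ker red).subgroupOf SL2hat)
  · intro x hx
    rw [Subgroup.mem_subgroupOf] at hx ⊢
    exact (mem_comm_iff _ x.2).2 (by rw [MonoidHom.mem_ker.1 hx]; exact Dsub.one_mem)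
  · have hset2 : (((MonoidHom.ker red).subgroupOf SL2hat : Subgroup SL2hat) : Set SL2hat)
        = Subtype.val ⁻¹' {A : GL (Fin 2) Zhat | red A = 1} := by
      ext x
      simp [Subgroup.mem_subgroupOf, MonoidHom.mem_ker]
    rw [hset2]
    exact IsOpen.preimage continuous_subtype_val (isOpen_red_fiber 1)

noncomputable def sS : GL (Fin 2) Zhat :=
  ⟨!![0,1;-1,0], !![0,-1;1,0],
   by ext i j; fin_cases i <;> fin_cases j <;> simp [Matrix.mul_apply, Fin.sum_univ_two],
   by ext i j; fin_cases i <;> fin_cases j <;> simp [Matrix.mul_apply, Fin.sum_univ_two]⟩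

lemma sS_mem_SL : sS ∈ SL2hat := by
  show ddet sS = 1
  apply Units.ext
  show (!![(0:Zhat),1;-1,0]).det = 1
  rw [Matrix.det_fin_two_of]
  ring

lemma red_sS : red sS = (Sw : (Matrix (Fin 2) (Fin 2) (ZMod 2))ˣ) := by
  apply Matrix.GeneralLinearGroup.ext
  intro i j
  show psi (sS.val i j) = (Sw : (Matrix (Fin 2) (Fin 2) (ZMod 2))ˣ).val i j
  fin_cases i <;> fin_cases j <;>
    · simp [sS, Sw, _root_.map_neg, _root_.map_one, _root_.map_zero]
      try decide

lemma uniqueness (H : Subgroup (GL (Fin 2) Zhat)) (hle : H ≤ SL2hat)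
    (hrel : H.relIndex SL2hat = 2)
    (hcong : ∀ A : GL (Fin 2) Zhat, A ∈ SL2hat → CongrOneHat 2 A → A ∈ H) :
    H = commGL2hat := by
  have hidx : (H.subgroupOf SL2hat).index = 2 := hrel
  have hKsub : ∀ x : GL (Fin 2) Zhat, x ∈ SL2hat → red x = 1 → x ∈ H :=
    fun x hx h1 => hcong x hx ((congrOne_iff_red x).2 h1)
  -- commutators of SL₂ lie in H
  have hcomm_in : ∀ u v : SL2hat, (⁅(u : GL (Fin 2) Zhat), (v : GL (Fin 2) Zhat)⁆) ∈ H := by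
    intro u v
    have h8 : ⁅u, v⁆ ∈ H.subgroupOf SL2hat := by
      rw [commutatorElement_def, Subgroup.mul_mem_iff_of_index_two hidx,
        Subgroup.mul_mem_iff_of_index_two hidx, Subgroup.mul_mem_iff_of_index_two hidx,
        (H.subgroupOf SL2hat).inv_mem_iff, (H.subgroupOf SL2hat).inv_mem_iff]
      tauto
    exact (Subgroup.mem_subgroupOf).1 h8
  set z : GL (Fin 2) Zhat := ⁅sS, Wu⁆ with hz
  have hzH : z ∈ H := hcomm_in ⟨sS, sS_mem_SL⟩ ⟨Wu, Wu_mem_SL⟩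
  have hzSL : z ∈ SL2hat := hle hzH
  have hred_z : red z = cu := by
    rw [hz, map_commutatorElement, red_sS, red_Wu]
    decide
  -- if the image of H contains anything outside A₃, H = SL₂ : contradiction
  have hDle : ∀ g : GL (Fin 2) (ZMod 2), g ∈ Subgroup.map red H → g ∈ Dsub := by
    intro g hg
    by_contra hgD
    have hchar : ∀ x : GL (Fin 2) Zhat, x ∈ SL2hat → red x ∈ Subgroup.map red H → x ∈ H := by
      intro x hx hmap
      obtain ⟨h0, hh0, heq⟩ := hmap
      have h1 : x * h0⁻¹ ∈ H := by
        apply hKsub _ (SL2hat.mul_mem hx (SL2hat.inv_mem (hle hh0)))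
        rw [_root_.map_mul, _root_.map_inv, heq]
        group
      have : x = (x * h0⁻¹) * h0 := by group
      rw [this]
      exact H.mul_mem h1 hh0
    have hcuH : cu ∈ Subgroup.map red H := ⟨z, hzH, hred_z⟩
    have hTop : ∀ h' : GL (Fin 2) (ZMod 2), h' ∈ Subgroup.map red H := by
      intro h'
      have key : ∀ h g : GL (Fin 2) (ZMod 2), ¬(g = 1 ∨ g = cu ∨ g = cu * cu) →
          (h = 1 ∨ h = cu ∨ h = cu * cu ∨ h = g ∨ h = g * cu ∨ h = g * (cu * cu)) := by
        decide
      rcases key h' g (fun hh => hgD ((mem_Dsub_iff g).2 hh)) with h | h | h | h | h | h <;> rw [h]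
      · exact Subgroup.one_mem _
      · exact hcuH
      · exact Subgroup.mul_mem _ hcuH hcuH
      · exact hg
      · exact Subgroup.mul_mem _ hg hcuH
      · exact Subgroup.mul_mem _ hg (Subgroup.mul_mem _ hcuH hcuH)
    have hHtop : H.subgroupOf SL2hat = ⊤ := by
      rw [Subgroup.eq_top_iff']
      intro y
      exact (Subgroup.mem_subgroupOf).2 (hchar _ y.2 (hTop _))
    rw [hHtop, Subgroup.index_top] at hidx
    exact absurd hidx (by norm_num)
  -- conclude H = commGL2hat
  ext x
  constructor
  · intro hx
    apply (mem_comm_iff x (hle hx)).2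
    exact hDle _ ⟨x, hx, rfl⟩
  · intro hx
    have hxSL : x ∈ SL2hat := comm_subset_SL hx
    have hxD := (mem_comm_iff x hxSL).1 hx
    have build : ∀ w : GL (Fin 2) Zhat, w ∈ H → w ∈ SL2hat → red x = red w → x ∈ H := by
      intro w hwH hwSL hredeq
      have h1 : x * w⁻¹ ∈ H := by
        apply hKsub _ (SL2hat.mul_mem hxSL (SL2hat.inv_mem hwSL))
        rw [_root_.map_mul, _root_.map_inv, hredeq]
        group
      have : x = (x * w⁻¹) * w := by group
      rw [this]
      exact H.mul_mem h1 hwH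
    rcases (mem_Dsub_iff _).1 hxD with h | h | h
    · exact hKsub x hxSL h
    · exact build z hzH hzSL (by rw [h, hred_z])
    · exact build (z * z) (H.mul_mem hzH hzH) (SL2hat.mul_mem hzSL hzSL)
        (by rw [h, _root_.map_mul, hred_z])

end Final

/-- The commutator subgroup of `GL₂(ẑ)` is an open subgroup of `SL₂(ẑ)` of
index 2 and of level 2; explicitly, it is the unique index 2 subgroup of `SL₂(ẑ)` containing
all matrices congruent to the identity modulo 2. -/
theorem commutator_GL2_Zhat :
    commGL2hat ≤ SL2hat ∧
    IsOpen {x : SL2hat | (x : GL (Fin 2) Zhat) ∈ commGL2hat} ∧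
    commGL2hat.relIndex SL2hat = 2 ∧
    levelSL commGL2hat = 2 ∧
    (∀ A : GL (Fin 2) Zhat, A ∈ SL2hat → CongrOneHat 2 A → A ∈ commGL2hat) ∧
    ∀ H : Subgroup (GL (Fin 2) Zhat), H ≤ SL2hat → H.relIndex SL2hat = 2 →
      (∀ A : GL (Fin 2) Zhat, A ∈ SL2hat → CongrOneHat 2 A → A ∈ H) → H = commGL2hat := by
  exact ⟨comm_subset_SL, open_comm, index_two, level_two, congr_mem_comm, uniqueness⟩
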